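/- Let A be a B×C row-stochastic matrix with ‖A‖_F = √B (so each row is a standard basis vector). Then ∑_{j=1}^{D} top_j(√(∑_{i=1}^B A_{i,j}²)) = ‖A‖_*, where top_j selects the jth largest value among the column norms and D = min(B,C); i.e., the fast batch nuclear-norm computation is exact for hard assignment matrices. -/

import Mathlib

open scoped BigOperators
open Polynomial

section Aux

lemma charpoly_conj_inv {n : ℕ} (U M V : Matrix (Fin n) (Fin n) ℝ)
    (hUV : U * V = 1) : (U * M * V).charpoly = M.charpoly := by
  unfold Matrix.charpoly
  have hone : (1 : Matrix (Fin n) (Fin n) ℝ).map (Polynomial.C) = 1 :=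
    Matrix.map_one _ (map_zero _) (map_one _)
  have hc : Commute (Matrix.scalar (Fin n) (X : ℝ[X])) (U.map Polynomial.C) :=
    Matrix.scalar_commute _ (fun r => Commute.all _ r) _
  have hcm : Matrix.charmatrix (U * M * V) =
      (U.map Polynomial.C) * Matrix.charmatrix M * (V.map Polynomial.C) := by
    unfold Matrix.charmatrix
    rw [Matrix.mul_sub, Matrix.sub_mul]
    congr 1
    · calc Matrix.scalar (Fin n) (X : ℝ[X])
          = Matrix.scalar (Fin n) (X : ℝ[X]) * ((U * V).map Polynomial.C) := by
            rw [hUV, hone, mul_one]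
        _ = Matrix.scalar (Fin n) (X : ℝ[X]) * (U.map Polynomial.C * V.map Polynomial.C) := by
            rw [Matrix.map_mul]
        _ = U.map Polynomial.C * Matrix.scalar (Fin n) (X : ℝ[X]) * V.map Polynomial.C := by
            rw [← mul_assoc, hc.eq]
    · simp [map_mul, RingHom.mapMatrix_apply]
  rw [hcm, Matrix.det_mul, Matrix.det_mul]
  have h1 : (U.map Polynomial.C).det * (V.map Polynomial.C).det = 1 := by
    rw [← Matrix.det_mul, ← Matrix.map_mul, hUV, hone, Matrix.det_one]
  rw [mul_right_comm, h1, one_mul]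

lemma charmatrix_diagonal {n : ℕ} (d : Fin n → ℝ) :
    Matrix.charmatrix (Matrix.diagonal d) =
      Matrix.diagonal (fun i => (X : ℝ[X]) - Polynomial.C (d i)) := by
  apply Matrix.ext
  intro i j
  by_cases h : i = j
  · subst h
    rw [Matrix.charmatrix_apply_eq, Matrix.diagonal_apply_eq d i]
    exact (Matrix.diagonal_apply_eq (fun k => (X : ℝ[X]) - Polynomial.C (d k)) i).symm
  · rw [Matrix.charmatrix_apply_ne _ _ _ h]
    simp [Matrix.diagonal_apply_ne (fun k => (X : ℝ[X]) - Polynomial.C (d k)) h, Matrix.diagonal_apply_ne d h]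

lemma charpoly_diagonal {n : ℕ} (d : Fin n → ℝ) :
    (Matrix.diagonal d).charpoly = ∏ i, ((X : ℝ[X]) - Polynomial.C (d i)) := by
  rw [Matrix.charpoly, charmatrix_diagonal, Matrix.det_diagonal]

/-- If a Hermitian real matrix equals a diagonal matrix, any sum of a function of its
eigenvalues equals the corresponding sum over the diagonal entries. -/
lemma sum_f_eigenvalues_diagonal {n : ℕ} {M : Matrix (Fin n) (Fin n) ℝ}
    (hM : M.IsHermitian) (d : Fin n → ℝ) (hMd : M = Matrix.diagonal d) (f : ℝ → ℝ) :
    ∑ j, f (hM.eigenvalues j) = ∑ j, f (d j) := by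
  have hspec := hM.spectral_theorem
  have hofReal : (RCLike.ofReal ∘ hM.eigenvalues : Fin n → ℝ) = hM.eigenvalues := by
    ext j; simp
  rw [hofReal] at hspec
  set U : Matrix (Fin n) (Fin n) ℝ := (hM.eigenvectorUnitary : Matrix (Fin n) (Fin n) ℝ)
  have hUV : U * star U = 1 :=
    Matrix.mem_unitaryGroup_iff.mp hM.eigenvectorUnitary.2
  have hchar : (Matrix.diagonal d).charpoly = (Matrix.diagonal hM.eigenvalues).charpoly := by
    rw [← hMd]
    conv_lhs => rw [hspec]
    exact charpoly_conj_inv U _ (star U) hUV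
  rw [charpoly_diagonal, charpoly_diagonal] at hchar
  have e1 : ((Finset.univ.val.map d).map fun a => (X : ℝ[X]) - Polynomial.C a).prod
      = ∏ i, ((X : ℝ[X]) - Polynomial.C (d i)) := by
    rw [Multiset.map_map]; rfl
  have e2 : ((Finset.univ.val.map hM.eigenvalues).map fun a => (X : ℝ[X]) - Polynomial.C a).prod
      = ∏ i, ((X : ℝ[X]) - Polynomial.C (hM.eigenvalues i)) := by
    rw [Multiset.map_map]; rfl
  have h1 := Polynomial.roots_multiset_prod_X_sub_C (Finset.univ.val.map d)
  have h2 := Polynomial.roots_multiset_prod_X_sub_C (Finset.univ.val.map hM.eigenvalues)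
  rw [e1] at h1
  rw [e2] at h2
  have hroots : (Finset.univ.val.map d) = (Finset.univ.val.map hM.eigenvalues) := by
    rw [← h1, ← h2, hchar]
  calc ∑ j, f (hM.eigenvalues j)
      = ((Finset.univ.val.map hM.eigenvalues).map f).sum := by
        rw [Multiset.map_map]; rfl
    _ = ((Finset.univ.val.map d).map f).sum := by rw [hroots]
    _ = ∑ j, f (d j) := by rw [Multiset.map_map]; rfl

end Aux

noncomputable def frobNorm {B C : ℕ} (A : Matrix (Fin B) (Fin C) ℝ) : ℝ :=
  Real.sqrt (∑ i, ∑ j, (A i j) ^ 2)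

/-- The nuclear norm of a real matrix: the sum of its singular values, i.e. of
the square roots of the eigenvalues of `Aᵀ * A`. -/
noncomputable def nuclearNorm {B C : ℕ} (A : Matrix (Fin B) (Fin C) ℝ) : ℝ :=
  ∑ j, Real.sqrt ((show (Matrix.transpose A * A).IsHermitian by
    simpa using Matrix.isHermitian_conjTranspose_mul_self A).eigenvalues j)

/-- For a hard assignment matrix (row stochastic with `‖A‖_F = √B`), at most
`min B C` column norms are nonzero, and their sum (hence the sum of the
`min B C` largest column norms) equals the nuclear norm: the fast batch
nuclear-norm computation is exact. -/
theorem fast_nuclearNorm_exact_of_hard_assignment {B C : ℕ} (A : Matrix (Fin B) (Fin C) ℝ)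
    (hpos : ∀ i j, 0 ≤ A i j) (hrow : ∀ i, ∑ j, A i j = 1)
    (hF : frobNorm A = Real.sqrt B) :
    Set.ncard {j : Fin C | Real.sqrt (∑ i, (A i j) ^ 2) ≠ 0} ≤ min B C ∧
      ∑ j, Real.sqrt (∑ i, (A i j) ^ 2) = nuclearNorm A := by
  -- entries are at most 1
  have hle1 : ∀ i j, A i j ≤ 1 := by
    intro i j
    calc A i j ≤ ∑ k, A i k := Finset.single_le_sum (fun k _ => hpos i k) (Finset.mem_univ j)
      _ = 1 := hrow i
  -- sum of squares equals B
  have hS : ∑ i, ∑ j, (A i j) ^ 2 = (B : ℝ) := by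
    have h0 : (0 : ℝ) ≤ ∑ i, ∑ j, (A i j) ^ 2 :=
      Finset.sum_nonneg fun i _ => Finset.sum_nonneg fun j _ => sq_nonneg _
    have hF' := hF
    unfold frobNorm at hF'
    exact (Real.sqrt_inj h0 (Nat.cast_nonneg B)).mp hF'
  -- entries in {0,1}
  have h01 : ∀ i j, A i j = 0 ∨ A i j = 1 := by
    have hsum : ∑ i, ∑ j, A i j * (1 - A i j) = 0 := by
      have : ∑ i, ∑ j, A i j * (1 - A i j)
          = (∑ i, ∑ j, A i j) - ∑ i, ∑ j, (A i j) ^ 2 := by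
        rw [← Finset.sum_sub_distrib]
        refine Finset.sum_congr rfl fun i _ => ?_
        rw [← Finset.sum_sub_distrib]
        refine Finset.sum_congr rfl fun j _ => ?_
        ring
      rw [this, hS]
      have : ∑ i : Fin B, ∑ j, A i j = (B : ℝ) := by
        simp [hrow]
      rw [this, sub_self]
    have hterm : ∀ i ∈ Finset.univ, ∀ j ∈ Finset.univ, (0:ℝ) ≤ A i j * (1 - A i j) :=
      fun i _ j _ => mul_nonneg (hpos i j) (by linarith [hle1 i j])
    intro i j
    have h0 : A i j * (1 - A i j) = 0 := by
      have houter : ∀ i ∈ Finset.univ, (0:ℝ) ≤ ∑ j, A i j * (1 - A i j) :=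
        fun i _ => Finset.sum_nonneg fun j _ => hterm i (Finset.mem_univ i) j (Finset.mem_univ j)
      have hrow0 : ∑ j, A i j * (1 - A i j) = 0 :=
        (Finset.sum_eq_zero_iff_of_nonneg houter).mp hsum i (Finset.mem_univ i)
      exact (Finset.sum_eq_zero_iff_of_nonneg
        (fun j _ => hterm i (Finset.mem_univ i) j (Finset.mem_univ j))).mp hrow0 j
        (Finset.mem_univ j)
    rcases mul_eq_zero.mp h0 with h | h
    · exact Or.inl h
    · exact Or.inr (by linarith)
  -- orthogonality of distinct columns rowwise
  have horth : ∀ i j k, j ≠ k → A i j * A i k = 0 := by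
    intro i j k hjk
    rcases h01 i j with h | h
    · rw [h, zero_mul]
    rcases h01 i k with h' | h'
    · rw [h', mul_zero]
    exfalso
    have hsub : ({j, k} : Finset (Fin C)) ⊆ Finset.univ := Finset.subset_univ _
    have : A i j + A i k ≤ ∑ l, A i l := by
      rw [← Finset.sum_pair hjk]
      exact Finset.sum_le_sum_of_subset_of_nonneg hsub fun l _ _ => hpos i l
    rw [h, h', hrow i] at this
    linarith
  -- A^T * A is diagonal with entries d j
  set d : Fin C → ℝ := fun j => ∑ i, (A i j) ^ 2 with hd
  have hdiag : A.transpose * A = Matrix.diagonal d := by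
    ext j k
    by_cases h : j = k
    · subst h
      simp [Matrix.mul_apply, Matrix.transpose_apply, hd, sq]
    · rw [Matrix.diagonal_apply_ne _ h]
      simp only [Matrix.mul_apply, Matrix.transpose_apply]
      exact Finset.sum_eq_zero fun i _ => horth i j k h
  constructor
  · -- cardinality bound
    set s : Set (Fin C) := {j : Fin C | Real.sqrt (∑ i, (A i j) ^ 2) ≠ 0} with hs
    have hsubC : s.ncard ≤ C := by
      have h := Set.ncard_le_ncard (Set.subset_univ s) Set.finite_univ
      rwa [Set.ncard_univ, Nat.card_eq_fintype_card, Fintype.card_fin] at h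
    have hex : ∀ j ∈ s, ∃ i : Fin B, A i j = 1 := by
      intro j hj
      simp only [hs, Set.mem_setOf_eq] at hj
      by_contra hcon
      push_neg at hcon
      apply hj
      have : ∑ i, (A i j) ^ 2 = 0 := Finset.sum_eq_zero fun i _ => by
        rcases h01 i j with h | h
        · rw [h]; ring
        · exact absurd h (hcon i)
      rw [this, Real.sqrt_zero]
    have hsubB : s.ncard ≤ B := by
      rcases Set.eq_empty_or_nonempty s with he | ⟨j0, hj0⟩
      · rw [he, Set.ncard_empty]; exact Nat.zero_le B
      · obtain ⟨i0, _⟩ := hex j0 hj0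
        classical
        choose g hg using hex
        have hinj : Set.InjOn (fun j => if h : j ∈ s then g j h else i0) s := by
          intro j hj k hk heq
          simp only [dif_pos hj, dif_pos hk] at heq
          by_contra hne
          have h1 := hg j hj
          have h2 := hg k hk
          rw [heq] at h1
          have h3 := horth (g k hk) j k hne
          rw [h1, h2, one_mul] at h3
          exact one_ne_zero h3
        have h := Set.ncard_le_ncard_of_injOn _ (fun a _ => Set.mem_univ _) hinj
          (Set.finite_univ (α := Fin B))
        rwa [Set.ncard_univ, Nat.card_eq_fintype_card, Fintype.card_fin] at h
    exact le_min hsubB hsubC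
  · -- sum equality
    unfold nuclearNorm
    exact (sum_f_eigenvalues_diagonal (show (Matrix.transpose A * A).IsHermitian by
        simpa using Matrix.isHermitian_conjTranspose_mul_self A) d hdiag
      Real.sqrt).symm
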